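/- Let D and Ψ be n × n complex Hermitian matrices, and let (Ψ + D)₊ denote the positive semidefinite matrix obtained from the spectral decomposition of Ψ + D by replacing negative eigenvalues with 0. Then E₀ = (Ψ + D)₊ − D satisfies E₀ + D ⪰ 0, and for every n × n Hermitian matrix E with E + D positive semidefinite, ‖Ψ − E₀‖_F ≤ ‖Ψ − E‖_F, where ‖M‖_F = sqrt(Re Tr(Mᴴ M)) is the Frobenius norm. -/

import Mathlib

/-!
Conjugating by the unitary `V` diagonalises `Ψ + D` and does not change Frobenius norms, so
everything reduces to comparing `diag d - C` with `diag (min d 0)`, where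
`C = Vᴴ (E + D) V` is positive semidefinite. The Frobenius norm of `diag d - C` dominates the
norm of its diagonal `d i - C i i`, and since `C i i ≥ 0` each entry satisfies
`|d i - C i i| ≥ |min (d i) 0|`.
-/

open Matrix
open scoped ComplexOrder

/-- Frobenius norm of a complex matrix. -/
noncomputable def frob {p q : ℕ} (M : Matrix (Fin p) (Fin q) ℂ) : ℝ :=
  Real.sqrt ((Mᴴ * M).trace.re)

namespace Matrix

variable {m n : Type*} [Fintype m] [Fintype n]

theorem re_trace_conjTranspose_mul_self (M : Matrix m n ℂ) :
    (Mᴴ * M).trace.re = ∑ i, ∑ j, Complex.normSq (M j i) := by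
  simp [trace, diag, mul_apply, conjTranspose_apply, Complex.re_sum,
    ← Complex.normSq_eq_conj_mul_self]

theorem sum_normSq_diag_le_re_trace_conjTranspose_mul_self (M : Matrix n n ℂ) :
    ∑ i, Complex.normSq (M i i) ≤ (Mᴴ * M).trace.re := by
  rw [re_trace_conjTranspose_mul_self]
  exact Finset.sum_le_sum fun i _ =>
    Finset.single_le_sum (f := fun j => Complex.normSq (M j i))
      (fun j _ => Complex.normSq_nonneg _) (Finset.mem_univ i)

theorem trace_conjTranspose_mul_self_unitary_conj [DecidableEq n] {V : Matrix n n ℂ}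
    (hV : V ∈ unitaryGroup n ℂ) (M : Matrix n n ℂ) :
    ((Vᴴ * M * V)ᴴ * (Vᴴ * M * V)).trace = (Mᴴ * M).trace := by
  have hVV : V * Vᴴ = 1 := mem_unitaryGroup_iff.mp hV
  calc ((Vᴴ * M * V)ᴴ * (Vᴴ * M * V)).trace
      = (Vᴴ * (Mᴴ * (V * Vᴴ) * M) * V).trace := by
        simp only [conjTranspose_mul, conjTranspose_conjTranspose, Matrix.mul_assoc]
    _ = (Mᴴ * M).trace := by
        rw [hVV, Matrix.mul_one, trace_mul_cycle, ← Matrix.mul_assoc, hVV, Matrix.one_mul]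

end Matrix

theorem sq_min_zero_le_sq_sub {d r : ℝ} (hr : 0 ≤ r) : min d 0 ^ 2 ≤ (d - r) ^ 2 := by
  rcases le_total d 0 with h | h
  · rw [min_eq_left h]; nlinarith
  · rw [min_eq_right h, zero_pow two_ne_zero]; exact sq_nonneg _

section Frobenius

variable {n : ℕ}

theorem frob_unitary_conj {V : Matrix (Fin n) (Fin n) ℂ} (hV : V ∈ unitaryGroup (Fin n) ℂ)
    (M : Matrix (Fin n) (Fin n) ℂ) : frob (Vᴴ * M * V) = frob M := by
  rw [frob, frob, trace_conjTranspose_mul_self_unitary_conj hV]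

theorem frob_diagonal_min_zero_le_frob_diagonal_sub (d : Fin n → ℝ)
    {C : Matrix (Fin n) (Fin n) ℂ} (hC : C.PosSemidef) :
    frob (diagonal fun i => ((min (d i) 0 : ℝ) : ℂ)) ≤
      frob (diagonal (fun i => (d i : ℂ)) - C) := by
  refine Real.sqrt_le_sqrt ?_
  calc ((diagonal fun i => ((min (d i) 0 : ℝ) : ℂ))ᴴ *
        diagonal fun i => ((min (d i) 0 : ℝ) : ℂ)).trace.re
      = ∑ i, min (d i) 0 ^ 2 := by simp [sq]
    _ ≤ ∑ i, Complex.normSq ((diagonal (fun i => (d i : ℂ)) - C) i i) := by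
        refine Finset.sum_le_sum fun i _ => ?_
        have hCi : 0 ≤ C i i := hC.diag_nonneg
        have hCi_real : C i i = (C i i).re :=
          Complex.eq_re_of_ofReal_le (r := 0) (by exact_mod_cast hCi)
        rw [Matrix.sub_apply, diagonal_apply_eq, hCi_real, ← Complex.ofReal_sub,
          Complex.normSq_ofReal, ← sq]
        exact sq_min_zero_le_sq_sub (Complex.nonneg_iff.mp hCi).1
    _ ≤ _ := sum_normSq_diag_le_re_trace_conjTranspose_mul_self _

end Frobenius

theorem stmt_13_general {n : ℕ} (D Ψ : Matrix (Fin n) (Fin n) ℂ)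
    (V : Matrix (Fin n) (Fin n) ℂ) (hV : V ∈ Matrix.unitaryGroup (Fin n) ℂ)
    (d : Fin n → ℝ)
    (hdecomp : Ψ + D = V * Matrix.diagonal (fun i => ((d i : ℝ) : ℂ)) * Vᴴ)
    (E₀ : Matrix (Fin n) (Fin n) ℂ)
    (hE₀ : E₀ = V * Matrix.diagonal (fun i => ((max (d i) 0 : ℝ) : ℂ)) * Vᴴ - D) :
    (E₀ + D).PosSemidef ∧
    (∀ E : Matrix (Fin n) (Fin n) ℂ, E.IsHermitian → (E + D).PosSemidef →
      frob (Ψ - E₀) ≤ frob (Ψ - E)) := by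
  have hE₀D : E₀ + D = V * diagonal (fun i => ((max (d i) 0 : ℝ) : ℂ)) * Vᴴ := by
    rw [hE₀, sub_add_cancel]
  have hVV : Vᴴ * V = 1 := mem_unitaryGroup_iff'.mp hV
  have hcancel : ∀ A : Matrix (Fin n) (Fin n) ℂ, Vᴴ * (V * A * Vᴴ) * V = A := fun A => by
    rw [← Matrix.mul_assoc, ← Matrix.mul_assoc, hVV, Matrix.one_mul, Matrix.mul_assoc, hVV,
      Matrix.mul_one]
  have hresidual : ∀ X, Vᴴ * (Ψ - X) * V = diagonal (fun i => (d i : ℂ)) - Vᴴ * (X + D) * V :=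
    fun X => by
      rw [show Ψ - X = (Ψ + D) - (X + D) by abel, Matrix.mul_sub, Matrix.sub_mul, hdecomp,
        hcancel]
  refine ⟨hE₀D ▸ (PosSemidef.diagonal fun i => by simp).mul_mul_conjTranspose_same V,
    fun E _ hED => ?_⟩
  have hresidual₀ : Vᴴ * (Ψ - E₀) * V = diagonal fun i => ((min (d i) 0 : ℝ) : ℂ) := by
    rw [hresidual, hE₀D, hcancel, diagonal_sub]
    congr 1
    funext i
    rw [← Complex.ofReal_sub]
    congr 1
    linarith [min_add_max (d i) 0]
  rw [← frob_unitary_conj hV, ← frob_unitary_conj hV (Ψ - E), hresidual₀, hresidual]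
  exact frob_diagonal_min_zero_le_frob_diagonal_sub d (hED.conjTranspose_mul_mul_same V)

theorem stmt_13 {n : ℕ} (D Ψ : Matrix (Fin n) (Fin n) ℂ)
    (hD : D.IsHermitian) (hΨ : Ψ.IsHermitian)
    (V : Matrix (Fin n) (Fin n) ℂ) (hV : V ∈ Matrix.unitaryGroup (Fin n) ℂ)
    (d : Fin n → ℝ)
    (hdecomp : Ψ + D = V * Matrix.diagonal (fun i => ((d i : ℝ) : ℂ)) * Vᴴ)
    (E₀ : Matrix (Fin n) (Fin n) ℂ)
    (hE₀ : E₀ = V * Matrix.diagonal (fun i => ((max (d i) 0 : ℝ) : ℂ)) * Vᴴ - D) :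
    (E₀ + D).PosSemidef ∧
    (∀ E : Matrix (Fin n) (Fin n) ℂ, E.IsHermitian → (E + D).PosSemidef →
      frob (Ψ - E₀) ≤ frob (Ψ - E)) :=
  stmt_13_general D Ψ V hV d hdecomp E₀ hE₀
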